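/- Let C and D be independent, each exponentially distributed with rate λ_g > 0, and let 0 < ε_1 ≤ 1. Then the random variable ν = (C + ε_1 D)² / (C + D) has variance Var[ν] = 2(17 + 7ε_1 − 3ε_1² + 7ε_1³ + 17ε_1⁴) / (45 λ_g²). -/

import Mathlib

/-!
The shear `(c, d) ↦ (c, c + d)` turns the joint law of `(C, D)` into the density `λ² e^{-λs}`
of `(C, C + D)` on `0 ≤ c ≤ s`, where `ν = (c + ε (s - c))² / s`. The inner integral
`∫₀ˢ (c + ε (s - c))²ⁿ dc = (1 + ε + ⋯ + ε²ⁿ) / (2n + 1) · s²ⁿ⁺¹` leaves a Gamma integral in `s`,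
so `E[νⁿ] = (1 + ε + ⋯ + ε²ⁿ) / (2n + 1) · (n + 1)! / λⁿ`, and `Var[ν] = E[ν²] - E[ν]²`.
-/

open MeasureTheory ProbabilityTheory Real
open Set Finset
open scoped Nat ENNReal

lemma integral_add_mul_sub_pow (ε s : ℝ) (m : ℕ) :
    ∫ c in (0 : ℝ)..s, (c + ε * (s - c)) ^ m
      = (∑ j ∈ range (m + 1), ε ^ j) / (m + 1) * s ^ (m + 1) := by
  rcases eq_or_ne ε 1 with rfl | hε
  · simp only [one_mul, add_sub_cancel, intervalIntegral.integral_const, one_pow, sum_const,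
      card_range, nsmul_eq_mul, mul_one, smul_eq_mul, sub_zero]
    push_cast
    field_simp
    ring
  · have h1ε : 1 - ε ≠ 0 := sub_ne_zero.mpr hε.symm
    have hε1 : ε - 1 ≠ 0 := sub_ne_zero.mpr hε
    have hcomp := intervalIntegral.integral_comp_mul_add (fun x : ℝ => x ^ m) h1ε (ε * s)
      (a := 0) (b := s)
    simp only [mul_zero, zero_add] at hcomp
    rw [show (fun c : ℝ => (c + ε * (s - c)) ^ m) = fun c => ((1 - ε) * c + ε * s) ^ m by
      ext c; ring_nf, hcomp, integral_pow, geom_sum_eq hε, smul_eq_mul]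
    field_simp
    ring

lemma lintegral_Ioi_pow_mul_exp_neg_mul {r : ℝ} (hr : 0 < r) (n : ℕ) :
    ∫⁻ s in Ioi 0, ENNReal.ofReal (s ^ n * exp (-(r * s)))
      = ENNReal.ofReal (n ! / r ^ (n + 1)) := by
  have hint : IntegrableOn (fun s : ℝ => s ^ n * exp (-(r * s))) (Ioi 0) := by
    refine (integrableOn_rpow_mul_exp_neg_mul_rpow (s := n) (p := 1)
      (by linarith [n.cast_nonneg (α := ℝ)]) zero_lt_one hr).congr_fun (fun s _ => ?_)
      measurableSet_Ioi
    simp [rpow_natCast]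
  have hnonneg : 0 ≤ᵐ[volume.restrict (Ioi 0)] fun s : ℝ => s ^ n * exp (-(r * s)) := by
    filter_upwards [ae_restrict_mem measurableSet_Ioi] with s (hs : 0 < s)
    positivity
  have hGamma := integral_rpow_mul_exp_neg_mul_Ioi (a := n + 1) (by positivity) hr
  simp only [add_sub_cancel_right, rpow_natCast] at hGamma
  rw [← ofReal_integral_eq_lintegral_ofReal hint hnonneg, hGamma, Gamma_nat_eq_factorial,
    ← Nat.cast_add_one, rpow_natCast, one_div, inv_pow, inv_mul_eq_div]

lemma exponentialPDF_mul_exponentialPDF_sub {r : ℝ} (hr : 0 ≤ r) (s c : ℝ) :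
    exponentialPDF r c * exponentialPDF r (s - c)
      = (Icc 0 s).indicator (fun _ => ENNReal.ofReal (r ^ 2 * exp (-(r * s)))) c := by
  by_cases hc : c ∈ Icc 0 s
  · rw [indicator_of_mem hc, exponentialPDF_of_nonneg hc.1,
      exponentialPDF_of_nonneg (sub_nonneg.mpr hc.2), ← ENNReal.ofReal_mul (by positivity),
      mul_mul_mul_comm, ← exp_add]
    ring_nf
  · rw [indicator_of_notMem hc]
    rcases not_and_or.mp hc with hc | hc
    · simp [exponentialPDF_of_neg (not_le.mp hc)]
    · simp [exponentialPDF_of_neg (sub_neg.mpr (not_le.mp hc))]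

lemma lintegral_expMeasure_prod {r : ℝ} (hr : 0 ≤ r) {F : ℝ × ℝ → ℝ≥0∞} (hF : Measurable F) :
    ∫⁻ p, F p ∂(expMeasure r).prod (expMeasure r)
      = ∫⁻ s in Ioi 0, ENNReal.ofReal (r ^ 2 * exp (-(r * s))) * ∫⁻ c in Icc 0 s, F (c, s - c) := by
  have hpdf : Measurable (exponentialPDF r) := (measurable_exponentialPDFReal r).ennreal_ofReal
  have hexp : expMeasure r = volume.withDensity (exponentialPDF r) := rfl
  rw [hexp, prod_withDensity hpdf hpdf,
    lintegral_withDensity_eq_lintegral_mul _ (by fun_prop) hF,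
    ← (measurePreserving_prod_sub volume volume).lintegral_comp (by fun_prop),
    lintegral_prod_symm' _ (by fun_prop)]
  simp only [Pi.mul_apply, exponentialPDF_mul_exponentialPDF_sub hr]
  have hinner : ∀ s, ∫⁻ c, (Icc 0 s).indicator (fun _ => ENNReal.ofReal (r ^ 2 * exp (-(r * s)))) c
      * F (c, s - c) = ENNReal.ofReal (r ^ 2 * exp (-(r * s))) * ∫⁻ c in Icc 0 s, F (c, s - c) := by
    intro s
    rw [← lintegral_const_mul _ (by fun_prop), ← lintegral_indicator measurableSet_Icc]
    refine lintegral_congr fun c => ?_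
    by_cases hc : c ∈ Icc 0 s <;> simp [hc]
  simp_rw [hinner]
  refine (setLIntegral_eq_of_support_subset fun s hs => ?_).symm
  by_contra hs'
  have hnull : volume (Icc 0 s) = 0 := by simpa using hs'
  exact hs (by simp [Measure.restrict_zero_set hnull])

lemma ae_nonneg_expMeasure (r : ℝ) : ∀ᵐ x ∂expMeasure r, 0 ≤ x := by
  have hexp : expMeasure r = volume.withDensity (exponentialPDF r) := rfl
  rw [hexp, ae_withDensity_iff (f := exponentialPDF r)
    (measurable_exponentialPDFReal r).ennreal_ofReal]
  exact ae_of_all _ fun x hx => not_lt.mp fun hx' => hx (exponentialPDF_of_neg hx')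

noncomputable def effectivePower (ε : ℝ) (p : ℝ × ℝ) : ℝ := (p.1 + ε * p.2) ^ 2 / (p.1 + p.2)

section effectivePower

variable {r : ℝ} (ε : ℝ) (n : ℕ)

@[fun_prop]
lemma measurable_effectivePower : Measurable (effectivePower ε) := by
  unfold effectivePower
  fun_prop

lemma setLIntegral_Icc_ofReal_effectivePower_pow {s : ℝ} (hs : 0 < s) :
    ∫⁻ c in Icc 0 s, ENNReal.ofReal (effectivePower ε (c, s - c) ^ n)
      = ENNReal.ofReal ((∑ j ∈ range (2 * n + 1), ε ^ j) / (2 * n + 1) * s ^ (n + 1)) := by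
  have hpow : ∀ c, effectivePower ε (c, s - c) ^ n = (c + ε * (s - c)) ^ (2 * n) / s ^ n := by
    intro c
    rw [effectivePower, add_sub_cancel, div_pow, pow_mul]
  simp_rw [hpow]
  rw [← ofReal_integral_eq_lintegral_ofReal, integral_Icc_eq_integral_Ioc,
    ← intervalIntegral.integral_of_le hs.le, intervalIntegral.integral_div,
    integral_add_mul_sub_pow]
  · congr 1
    push_cast
    field_simp
    ring
  · exact (by fun_prop : Continuous _).integrableOn_Icc
  · exact ae_of_all _ fun c => div_nonneg ((even_two_mul n).pow_nonneg _) (pow_nonneg hs.le n)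

lemma lintegral_ofReal_effectivePower_pow (hr : 0 < r) :
    ∫⁻ p, ENNReal.ofReal (effectivePower ε p ^ n) ∂(expMeasure r).prod (expMeasure r)
      = ENNReal.ofReal ((∑ j ∈ range (2 * n + 1), ε ^ j) / (2 * n + 1) * (n + 1)! / r ^ n) := by
  set K := (∑ j ∈ range (2 * n + 1), ε ^ j) / (2 * n + 1)
  have hK : 0 ≤ K := by
    have := (odd_two_mul_add_one n).geom_sum_pos (x := ε)
    positivity
  rw [lintegral_expMeasure_prod hr.le (by fun_prop)]
  calc ∫⁻ s in Ioi 0, ENNReal.ofReal (r ^ 2 * exp (-(r * s)))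
        * ∫⁻ c in Icc 0 s, ENNReal.ofReal (effectivePower ε (c, s - c) ^ n)
      = ∫⁻ s in Ioi 0,
          ENNReal.ofReal (r ^ 2 * K) * ENNReal.ofReal (s ^ (n + 1) * exp (-(r * s))) := by
        refine setLIntegral_congr_fun measurableSet_Ioi fun s hs => ?_
        rw [setLIntegral_Icc_ofReal_effectivePower_pow ε n hs,
          ← ENNReal.ofReal_mul (by positivity), ← ENNReal.ofReal_mul (by positivity)]
        congr 1
        ring
    _ = ENNReal.ofReal (K * (n + 1)! / r ^ n) := by
        rw [lintegral_const_mul _ (by fun_prop), lintegral_Ioi_pow_mul_exp_neg_mul hr,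
          ← ENNReal.ofReal_mul (by positivity)]
        congr 1
        field_simp
        ring

lemma ae_nonneg_effectivePower_pow :
    0 ≤ᵐ[(expMeasure r).prod (expMeasure r)] fun p => effectivePower ε p ^ n := by
  filter_upwards [Measure.quasiMeasurePreserving_fst.ae (ae_nonneg_expMeasure r),
    Measure.quasiMeasurePreserving_snd.ae (ae_nonneg_expMeasure r)] with p hc hd
  unfold effectivePower
  positivity

lemma integrable_effectivePower_pow (hr : 0 < r) :
    Integrable (fun p => effectivePower ε p ^ n) ((expMeasure r).prod (expMeasure r)) := by
  refine ⟨by fun_prop, ?_⟩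
  rw [hasFiniteIntegral_iff_ofReal (ae_nonneg_effectivePower_pow ε n),
    lintegral_ofReal_effectivePower_pow ε n hr]
  exact ENNReal.ofReal_lt_top

lemma integral_effectivePower_pow (hr : 0 < r) :
    ∫ p, effectivePower ε p ^ n ∂(expMeasure r).prod (expMeasure r)
      = (∑ j ∈ range (2 * n + 1), ε ^ j) / (2 * n + 1) * (n + 1)! / r ^ n := by
  have hpos := (odd_two_mul_add_one n).geom_sum_pos (x := ε)
  rw [integral_eq_lintegral_of_nonneg_ae (ae_nonneg_effectivePower_pow ε n) (by fun_prop),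
    lintegral_ofReal_effectivePower_pow ε n hr, ENNReal.toReal_ofReal (by positivity)]

end effectivePower

theorem timing_offset_effective_power_variance_general
    {Ω : Type*} [MeasureSpace Ω] [IsProbabilityMeasure (ℙ : Measure Ω)]
    (lamg : ℝ) (hlamg : 0 < lamg)
    (eps1 : ℝ)
    (C D : Ω → ℝ) (hC : Measurable C) (hD : Measurable D)
    (hindep : IndepFun C D ℙ)
    (hClaw : Measure.map C ℙ = expMeasure lamg)
    (hDlaw : Measure.map D ℙ = expMeasure lamg) :
    variance (fun ω => (C ω + eps1 * D ω) ^ 2 / (C ω + D ω)) ℙ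
      = 2 * (17 + 7 * eps1 - 3 * eps1 ^ 2 + 7 * eps1 ^ 3 + 17 * eps1 ^ 4)
          / (45 * lamg ^ 2) := by
  have : IsProbabilityMeasure (expMeasure lamg) := isProbabilityMeasure_expMeasure hlamg
  have hlaw : MeasurePreserving (fun ω => (C ω, D ω)) ℙ
      ((expMeasure lamg).prod (expMeasure lamg)) :=
    ⟨hC.prodMk hD, by
      rw [(indepFun_iff_map_prod_eq_prod_map_map hC.aemeasurable hD.aemeasurable).mp hindep,
        hClaw, hDlaw]⟩
  have hmemLp : MemLp (effectivePower eps1) 2 ((expMeasure lamg).prod (expMeasure lamg)) :=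
    (memLp_two_iff_integrable_sq (by fun_prop)).mpr (integrable_effectivePower_pow eps1 2 hlamg)
  have hmean := integral_effectivePower_pow eps1 1 hlamg
  simp only [pow_one] at hmean
  refine (hlaw.variance_fun_comp (measurable_effectivePower eps1).aemeasurable).trans ?_
  rw [variance_eq_sub hmemLp]
  simp only [Pi.pow_apply, hmean, integral_effectivePower_pow eps1 2 hlamg, sum_range_succ,
    sum_range_zero]
  norm_num [Nat.factorial]
  field_simp
  ring

/-- If `C, D` are independent `Exp(λ_g)` random variables and `0 < ε_1 ≤ 1`, then
`ν = (C + ε_1 D)²/(C + D)` has variance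
`2(17 + 7ε_1 − 3ε_1² + 7ε_1³ + 17ε_1⁴)/(45 λ_g²)`. -/
theorem timing_offset_effective_power_variance
    {Ω : Type*} [MeasureSpace Ω] [IsProbabilityMeasure (ℙ : Measure Ω)]
    (lamg : ℝ) (hlamg : 0 < lamg)
    (eps1 : ℝ) (heps1 : 0 < eps1) (heps1' : eps1 ≤ 1)
    (C D : Ω → ℝ) (hC : Measurable C) (hD : Measurable D)
    (hindep : IndepFun C D ℙ)
    (hClaw : Measure.map C ℙ = expMeasure lamg)
    (hDlaw : Measure.map D ℙ = expMeasure lamg) :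
    variance (fun ω => (C ω + eps1 * D ω) ^ 2 / (C ω + D ω)) ℙ
      = 2 * (17 + 7 * eps1 - 3 * eps1 ^ 2 + 7 * eps1 ^ 3 + 17 * eps1 ^ 4)
          / (45 * lamg ^ 2) :=
  timing_offset_effective_power_variance_general lamg hlamg eps1 C D hC hD hindep hClaw hDlaw
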